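/- arXiv:1206.5550 — 2 statements merged into one kernel-verified Lean document; each statement's English description precedes it below -/
import Mathlib

section
/- Let f, g, h, k : [0,∞) → ℂ² be measurable functions all lying in L²(H,ℝ₊), with f and h locally absolutely continuous satisfying f(x) = f(0) − ∫₀ˣ J H(t) g(t) dt and h(x) = h(0) − ∫₀ˣ J H(t) k(t) dt for all x ≥ 0 (i.e., Jf' = Hg and Jh' = Hk a.e.). Then the limit lim_{x→∞} f(x)* J h(x) exists and equals f(0)* J h(0) + ∫₀^∞ ( f(t)* H(t) k(t) − g(t)* H(t) h(t) ) dt, where both integrals converge absolutely. -/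
/-!
For positive semidefinite `H`, `|u* H v| ≤ (u* H u + v* H v) / 2`, so `f* H k` and `g* H h` are
integrable on `(0, ∞)`, and `H u` is locally integrable for every `u ∈ L²(H, ℝ₊)`.

The pairing `(u, v) ↦ u* J v` is `ℝ`-bilinear and `f, h` are primitives of `-J H g`, `-J H k`,
so the product rule for primitives (Fubini on `[0, x]²`, split along the diagonal) gives
`f(x)* J h(x) - f(0)* J h(0) = ∫₀ˣ ((-J H g)* J h + f* J (-J H k))`. Since `J* J = 1`, `J² = -1`
and `H` is Hermitian, the integrand is `f* H k - g* H h`; letting `x → ∞` gives the limit.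
-/

open MeasureTheory Matrix Set
open scoped ComplexOrder

noncomputable section

/-- The matrix `J = [[0,-1],[1,0]]`. -/
def Jmat : Matrix (Fin 2) (Fin 2) ℂ := !![0, -1; 1, 0]

/-- `u` is a solution of the canonical system `J u' = z H u` on `[0,∞)`:
`u(x) = u(0) − z ∫₀ˣ J H(t) u(t) dt` for all `x ≥ 0`. -/
def IsSolution (H : ℝ → Matrix (Fin 2) (Fin 2) ℂ) (z : ℂ) (u : ℝ → Fin 2 → ℂ) : Prop :=
  ∀ x ≥ (0:ℝ), u x = u 0 - z • ∫ t in (0:ℝ)..x, (Jmat * H t).mulVec (u t)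

/-- `u` lies in `L²(H, ℝ₊)`: `∫₀^∞ u(x)* H(x) u(x) dx < ∞`. -/
def InL2 (H : ℝ → Matrix (Fin 2) (Fin 2) ℂ) (u : ℝ → Fin 2 → ℂ) : Prop :=
  IntegrableOn (fun x => star (u x) ⬝ᵥ (H x).mulVec (u x)) (Set.Ioi 0)

open Filter

namespace Matrix

variable {n : Type*} [Fintype n]

/-- `(u, v) ↦ u* M v`, bundled over `ℝ` because it is only conjugate-linear in `u`. -/
def sesqFormL (M : Matrix n n ℂ) : (n → ℂ) →L[ℝ] (n → ℂ) →L[ℝ] ℂ :=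
  LinearMap.toContinuousLinearMap <| LinearMap.toContinuousLinearMap.toLinearMap ∘ₗ
    LinearMap.mk₂ ℝ (fun u v => star u ⬝ᵥ M *ᵥ v)
      (fun u u' v => by simp [add_dotProduct])
      (fun c u v => by simp [star_smul, smul_dotProduct])
      (fun u v v' => by simp [mulVec_add, dotProduct_add])
      (fun c u v => by simp [mulVec_smul, dotProduct_smul])

@[simp] lemma sesqFormL_apply (M : Matrix n n ℂ) (u v : n → ℂ) :
    sesqFormL M u v = star u ⬝ᵥ M *ᵥ v := rfl

lemma re_star_dotProduct_self (a : n → ℂ) : (star a ⬝ᵥ a).re = ∑ i, ‖a i‖ ^ 2 := by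
  simp [dotProduct, Complex.re_sum, Complex.sq_norm, Complex.normSq_apply]

lemma norm_star_dotProduct_le (a b : n → ℂ) :
    ‖star a ⬝ᵥ b‖ ≤ ((star a ⬝ᵥ a).re + (star b ⬝ᵥ b).re) / 2 := by
  rw [re_star_dotProduct_self, re_star_dotProduct_self, ← Finset.sum_add_distrib, Finset.sum_div]
  refine (norm_sum_le _ _).trans (Finset.sum_le_sum fun i _ => ?_)
  rw [Pi.star_apply, norm_mul, norm_star]
  nlinarith [sq_nonneg (‖a i‖ - ‖b i‖)]

lemma star_mulVec_dotProduct (A : Matrix n n ℂ) (v w : n → ℂ) :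
    star (A *ᵥ v) ⬝ᵥ w = star v ⬝ᵥ Aᴴ *ᵥ w := by
  rw [star_mulVec, dotProduct_mulVec]

namespace PosSemidef

variable {M : Matrix n n ℂ}

lemma re_dotProduct_mulVec_nonneg (hM : M.PosSemidef) (u : n → ℂ) :
    0 ≤ (star u ⬝ᵥ M *ᵥ u).re :=
  Complex.nonneg_iff.mp (hM.dotProduct_mulVec_nonneg u) |>.1

lemma norm_dotProduct_mulVec_le (hM : M.PosSemidef) (u v : n → ℂ) :
    ‖star u ⬝ᵥ M *ᵥ v‖ ≤ ((star u ⬝ᵥ M *ᵥ u).re + (star v ⬝ᵥ M *ᵥ v).re) / 2 := by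
  obtain ⟨S, rfl⟩ : ∃ S : Matrix n n ℂ, M = Sᴴ * S := by
    classical
    open scoped MatrixOrder Matrix.Norms.L2Operator in
    exact CStarAlgebra.nonneg_iff_eq_star_mul_self.mp hM.nonneg
  have hS : ∀ a b, star a ⬝ᵥ (Sᴴ * S) *ᵥ b = star (S *ᵥ a) ⬝ᵥ S *ᵥ b := fun a b => by
    rw [star_mulVec, ← dotProduct_mulVec, mulVec_mulVec]
  simpa only [hS] using norm_star_dotProduct_le (S *ᵥ u) (S *ᵥ v)

lemma norm_mulVec_le [DecidableEq n] (hM : M.PosSemidef) (v : n → ℂ) :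
    ‖M *ᵥ v‖ ≤ (M.trace.re + (star v ⬝ᵥ M *ᵥ v).re) / 2 := by
  have hv := hM.re_dotProduct_mulVec_nonneg v
  have hdiag : ∀ i, 0 ≤ (M i i).re := fun i => Complex.nonneg_iff.mp hM.diag_nonneg |>.1
  have htr : 0 ≤ M.trace.re := by
    rw [trace, Complex.re_sum]
    exact Finset.sum_nonneg fun j _ => hdiag j
  refine (pi_norm_le_iff_of_nonneg (by positivity)).2 fun i => ?_
  have hi : (M i i).re ≤ M.trace.re := by
    rw [trace, Complex.re_sum]
    exact Finset.single_le_sum (fun j _ => hdiag j) (Finset.mem_univ i)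
  calc ‖(M *ᵥ v) i‖ = ‖star (Pi.single i 1) ⬝ᵥ M *ᵥ v‖ := by simp
    _ ≤ ((M i i).re + (star v ⬝ᵥ M *ᵥ v).re) / 2 := by
      simpa using hM.norm_dotProduct_mulVec_le (Pi.single i 1) v
    _ ≤ _ := by linarith

end PosSemidef
end Matrix

section IntegrationByParts

variable {E F G : Type*} [NormedAddCommGroup E] [NormedSpace ℝ E]
  [NormedAddCommGroup F] [NormedSpace ℝ F] [NormedAddCommGroup G] [NormedSpace ℝ G]
  (B : E →L[ℝ] F →L[ℝ] G) {a b : ℝ}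

namespace IntervalIntegrable

lemma bilin_continuousOn {p : ℝ → E} {β : ℝ → F} (hp : IntervalIntegrable p volume a b)
    (hβ : ContinuousOn β (uIcc a b)) : IntervalIntegrable (fun t => B (p t) (β t)) volume a b := by
  rw [intervalIntegrable_iff] at hp ⊢
  obtain ⟨C, hC⟩ := isCompact_uIcc.exists_bound_of_continuousOn hβ
  exact B.flip.integrable_of_bilin_of_bdd_left C
    ((hβ.mono uIoc_subset_uIcc).aestronglyMeasurable measurableSet_uIoc)
    (ae_restrict_of_forall_mem measurableSet_uIoc fun t ht => hC t (uIoc_subset_uIcc ht)) hp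

lemma continuousOn_bilin {α : ℝ → E} {q : ℝ → F} (hq : IntervalIntegrable q volume a b)
    (hα : ContinuousOn α (uIcc a b)) : IntervalIntegrable (fun t => B (α t) (q t)) volume a b :=
  hq.bilin_continuousOn B.flip hα

end IntervalIntegrable

namespace intervalIntegral

lemma integral_indicator_Iic_restrict_Ioc {t : ℝ} (ht : t ∈ Ioc a b) (φ : ℝ → G) :
    ∫ s, (Iic t).indicator φ s ∂volume.restrict (Ioc a b) = ∫ s in a..t, φ s := by
  rw [MeasureTheory.integral_indicator measurableSet_Iic,
    Measure.restrict_restrict measurableSet_Iic, Iic_inter_Ioc_of_le ht.2, integral_of_le ht.1.le]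

lemma integral_indicator_Iio_restrict_Ioc {t : ℝ} (ht : t ∈ Ioc a b) (φ : ℝ → G) :
    ∫ s, (Iio t).indicator φ s ∂volume.restrict (Ioc a b) = ∫ s in a..t, φ s := by
  rw [MeasureTheory.integral_indicator measurableSet_Iio, setIntegral_congr_set Iio_ae_eq_Iic,
    ← MeasureTheory.integral_indicator measurableSet_Iic, integral_indicator_Iic_restrict_Ioc ht]

variable [CompleteSpace E] [CompleteSpace F] [CompleteSpace G]

theorem bilin_integral_integral (hab : a ≤ b) {p : ℝ → E} {q : ℝ → F}
    (hp : IntervalIntegrable p volume a b) (hq : IntervalIntegrable q volume a b) :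
    B (∫ t in a..b, p t) (∫ t in a..b, q t) =
      ∫ t in a..b, (B (p t) (∫ s in a..t, q s) + B (∫ s in a..t, p s) (q t)) := by
  set μ := volume.restrict (Ioc a b)
  set T : Set (ℝ × ℝ) := {z | z.1 < z.2}
  have hT : MeasurableSet T := measurableSet_lt measurable_fst measurable_snd
  set Φ := fun z : ℝ × ℝ => B (p z.1) (q z.2)
  have hΦ : Integrable Φ (μ.prod μ) := hp.1.op_fst_snd (by fun_prop) ⟨‖B‖, B.le_opNorm₂⟩ hq.1
  have hsub {t : ℝ} (ht : t ∈ Ioc a b) : uIcc a t ⊆ uIcc a b :=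
    uIcc_subset_uIcc left_mem_uIcc (mem_uIcc_of_le ht.1.le ht.2)
  have lower : ∫ z, T.indicator Φ z ∂μ.prod μ = ∫ t in a..b, B (∫ s in a..t, p s) (q t) := by
    rw [integral_prod_symm _ (hΦ.indicator hT), integral_of_le hab]
    refine setIntegral_congr_fun measurableSet_Ioc fun t ht => ?_
    calc ∫ s, T.indicator Φ (s, t) ∂μ
        = ∫ s, (Iio t).indicator (fun s => B.flip (q t) (p s)) s ∂μ := rfl
      _ = B (∫ s in a..t, p s) (q t) := by
          rw [integral_indicator_Iio_restrict_Ioc ht,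
            (B.flip (q t)).intervalIntegral_comp_comm (hp.mono_set (hsub ht))]
          rfl
  have upper : ∫ z, Tᶜ.indicator Φ z ∂μ.prod μ = ∫ t in a..b, B (p t) (∫ s in a..t, q s) := by
    rw [integral_prod _ (hΦ.indicator hT.compl), integral_of_le hab]
    refine setIntegral_congr_fun measurableSet_Ioc fun t ht => ?_
    calc ∫ s, Tᶜ.indicator Φ (t, s) ∂μ
        = ∫ s, (Iic t).indicator (fun s => B (p t) (q s)) s ∂μ := by
          congr 1 with s
          by_cases hst : s ≤ t <;> simp [T, Φ, hst]
      _ = B (p t) (∫ s in a..t, q s) := by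
          rw [integral_indicator_Iic_restrict_Ioc ht,
            (B (p t)).intervalIntegral_comp_comm (hq.mono_set (hsub ht))]
  have hP := continuousOn_primitive_interval' hp left_mem_uIcc
  have hQ := continuousOn_primitive_interval' hq left_mem_uIcc
  calc B (∫ t in a..b, p t) (∫ t in a..b, q t) = ∫ z, Φ z ∂μ.prod μ := by
        rw [integral_of_le hab, integral_of_le hab, integral_prod_bilin B hp.1 hq.1]
    _ = ∫ z, Tᶜ.indicator Φ z ∂μ.prod μ + ∫ z, T.indicator Φ z ∂μ.prod μ := by
        rw [← MeasureTheory.integral_add (hΦ.indicator hT.compl) (hΦ.indicator hT)]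
        simp only [indicator_compl_add_self_apply]
    _ = _ := by
        rw [upper, lower, integral_add (hp.bilin_continuousOn B hQ) (hq.continuousOn_bilin B hP)]

theorem integral_bilin_eq_sub (hab : a ≤ b) {α p : ℝ → E} {β q : ℝ → F}
    (hp : IntervalIntegrable p volume a b) (hq : IntervalIntegrable q volume a b)
    (hα : ∀ t ∈ Icc a b, α t = α a + ∫ s in a..t, p s)
    (hβ : ∀ t ∈ Icc a b, β t = β a + ∫ s in a..t, q s) :
    ∫ t in a..b, (B (p t) (β t) + B (α t) (q t)) = B (α b) (β b) - B (α a) (β a) := by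
  have hP : ContinuousOn (fun t => ∫ s in a..t, p s) (uIcc a b) :=
    continuousOn_primitive_interval' hp left_mem_uIcc
  have hQ : ContinuousOn (fun t => ∫ s in a..t, q s) (uIcc a b) :=
    continuousOn_primitive_interval' hq left_mem_uIcc
  have hαβ : EqOn (fun t => B (p t) (β t) + B (α t) (q t))
      (fun t => (B (p t) (β a) + B (α a) (q t)) +
        (B (p t) (∫ s in a..t, q s) + B (∫ s in a..t, p s) (q t))) (uIcc a b) := by
    intro t ht
    rw [uIcc_of_le hab] at ht
    simp only [hα t ht, hβ t ht, map_add, _root_.add_apply]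
    abel
  have hpβ : ∫ t in a..b, B (p t) (β a) = B (∫ t in a..b, p t) (β a) :=
    (B.flip (β a)).intervalIntegral_comp_comm hp
  have hαq : ∫ t in a..b, B (α a) (q t) = B (α a) (∫ t in a..b, q t) :=
    (B (α a)).intervalIntegral_comp_comm hq
  have hpβa := hp.bilin_continuousOn B (continuousOn_const (c := β a))
  have hαaq := hq.continuousOn_bilin B (continuousOn_const (c := α a))
  rw [integral_congr hαβ,
    integral_add (hpβa.add hαaq) ((hp.bilin_continuousOn B hQ).add (hq.continuousOn_bilin B hP)),
    integral_add hpβa hαaq, hpβ, hαq, ← bilin_integral_integral B hab hp hq,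
    hα b ⟨hab, le_rfl⟩, hβ b ⟨hab, le_rfl⟩]
  simp only [map_add, _root_.add_apply]
  abel

end intervalIntegral

end IntegrationByParts

section Measurability

variable {α n : Type*} [MeasurableSpace α] [Fintype n] {H : α → Matrix n n ℂ}

lemma Matrix.measurable_mulVec (hH : ∀ i j, Measurable fun x => H x i j) {v : α → n → ℂ}
    (hv : Measurable v) : Measurable fun x => H x *ᵥ v x :=
  measurable_pi_lambda _ fun i => Finset.measurable_sum _ fun j _ =>
    (hH i j).mul ((measurable_pi_apply j).comp hv)

lemma Matrix.measurable_star_dotProduct_mulVec (hH : ∀ i j, Measurable fun x => H x i j)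
    {u v : α → n → ℂ} (hu : Measurable u) (hv : Measurable v) :
    Measurable fun x => star (u x) ⬝ᵥ H x *ᵥ v x :=
  Finset.measurable_sum _ fun i _ =>
    (Complex.continuous_conj.measurable.comp ((measurable_pi_apply i).comp hu)).mul
      ((measurable_pi_apply i).comp (measurable_mulVec hH hv))

end Measurability

lemma Jmat_mul_Jmat : Jmat * Jmat = -1 := by
  ext i j; fin_cases i <;> fin_cases j <;> simp [Jmat]

lemma Jmat_conjTranspose : Jmatᴴ = -Jmat := by
  ext i j; fin_cases i <;> fin_cases j <;> simp [Jmat]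

lemma Matrix.IsHermitian.sesqFormL_Jmat_neg_mulVec {M : Matrix (Fin 2) (Fin 2) ℂ}
    (hM : M.IsHermitian) (u v w z : Fin 2 → ℂ) :
    sesqFormL Jmat (-((Jmat * M) *ᵥ v)) w + sesqFormL Jmat u (-((Jmat * M) *ᵥ z)) =
      star u ⬝ᵥ M *ᵥ z - star v ⬝ᵥ M *ᵥ w := by
  simp only [sesqFormL_apply, star_neg, neg_dotProduct, mulVec_neg, dotProduct_neg,
    star_mulVec_dotProduct, mulVec_mulVec, conjTranspose_mul, hM.eq, Jmat_conjTranspose,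
    ← Matrix.mul_assoc, Jmat_mul_Jmat]
  simp only [Matrix.mul_neg, Matrix.neg_mul, Matrix.mul_assoc, Jmat_mul_Jmat, Matrix.mul_one,
    Matrix.one_mul, neg_neg, neg_mulVec, dotProduct_neg]
  ring

section CanonicalSystem

variable {H : ℝ → Matrix (Fin 2) (Fin 2) ℂ}

lemma InL2.integrableOn_star_dotProduct_mulVec (hmeas : ∀ i j, Measurable fun x => H x i j)
    (hpsd : ∀ᵐ x ∂(volume.restrict (Ioi 0)), (H x).PosSemidef) {u v : ℝ → Fin 2 → ℂ}
    (hu : Measurable u) (hv : Measurable v) (huL2 : InL2 H u) (hvL2 : InL2 H v) :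
    IntegrableOn (fun t => star (u t) ⬝ᵥ H t *ᵥ v t) (Ioi 0) :=
  Integrable.mono' ((huL2.re.add hvL2.re).div_const 2)
    (measurable_star_dotProduct_mulVec hmeas hu hv).aestronglyMeasurable
    (hpsd.mono fun t ht => ht.norm_dotProduct_mulVec_le (u t) (v t))

lemma InL2.integrableOn_mulVec (hmeas : ∀ i j, Measurable fun x => H x i j)
    (hloc : ∀ i j, LocallyIntegrableOn (fun x => H x i j) (Ici 0))
    (hpsd : ∀ᵐ x ∂(volume.restrict (Ici 0)), (H x).PosSemidef) {u : ℝ → Fin 2 → ℂ}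
    (hu : Measurable u) (huL2 : InL2 H u) (x : ℝ) :
    IntegrableOn (fun t => H t *ᵥ u t) (Ioc 0 x) := by
  have htrace : IntegrableOn (fun t => (H t).trace) (Ioc 0 x) :=
    integrable_finsetSum _ fun i _ =>
      ((hloc i i).integrableOn_compact_subset Icc_subset_Ici_self isCompact_Icc).mono_set
        Ioc_subset_Icc_self
  refine Integrable.mono' ((htrace.re.add (huL2.mono_set Ioc_subset_Ioi_self).re).div_const 2)
    (measurable_mulVec hmeas hu).aestronglyMeasurable ?_
  filter_upwards [ae_restrict_of_ae_restrict_of_subset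
    (Ioc_subset_Icc_self.trans Icc_subset_Ici_self) hpsd] with t ht
  exact ht.norm_mulVec_le (u t)

lemma intervalIntegrable_neg_Jmat_mul_mulVec (hmeas : ∀ i j, Measurable fun x => H x i j)
    (hloc : ∀ i j, LocallyIntegrableOn (fun x => H x i j) (Ici 0))
    (hpsd : ∀ᵐ x ∂(volume.restrict (Ici 0)), (H x).PosSemidef) {u : ℝ → Fin 2 → ℂ}
    (hu : Measurable u) (huL2 : InL2 H u) {x : ℝ} (hx : 0 ≤ x) :
    IntervalIntegrable (fun t => -((Jmat * H t) *ᵥ u t)) volume 0 x := by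
  rw [intervalIntegrable_iff_integrableOn_Ioc_of_le hx]
  refine ((LinearMap.toContinuousLinearMap (mulVecLin Jmat)).integrable_comp
    (huL2.integrableOn_mulVec hmeas hloc hpsd hu x)).neg.congr (ae_of_all _ fun t => ?_)
  simp only [Pi.neg_apply, LinearMap.coe_toContinuousLinearMap', mulVecLin_apply, mulVec_mulVec]

theorem star_dotProduct_Jmat_mulVec_eq_add_integral (hmeas : ∀ i j, Measurable fun x => H x i j)
    (hpsd : ∀ᵐ x ∂(volume.restrict (Ici 0)), (H x).PosSemidef)
    (hloc : ∀ i j, LocallyIntegrableOn (fun x => H x i j) (Ici 0)) {f g h k : ℝ → Fin 2 → ℂ}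
    (hgm : Measurable g) (hkm : Measurable k) (hgL2 : InL2 H g) (hkL2 : InL2 H k)
    (hf : ∀ x ≥ (0:ℝ), f x = f 0 - ∫ t in (0:ℝ)..x, (Jmat * H t) *ᵥ g t)
    (hh : ∀ x ≥ (0:ℝ), h x = h 0 - ∫ t in (0:ℝ)..x, (Jmat * H t) *ᵥ k t) {x : ℝ} (hx : 0 ≤ x) :
    star (f x) ⬝ᵥ Jmat *ᵥ h x = star (f 0) ⬝ᵥ Jmat *ᵥ h 0 +
      ∫ t in (0:ℝ)..x, (star (f t) ⬝ᵥ H t *ᵥ k t - star (g t) ⬝ᵥ H t *ᵥ h t) := by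
  have hprimitive {u v : ℝ → Fin 2 → ℂ}
      (huv : ∀ x ≥ (0:ℝ), u x = u 0 - ∫ t in (0:ℝ)..x, (Jmat * H t) *ᵥ v t) :
      ∀ t ∈ Icc 0 x, u t = u 0 + ∫ s in (0:ℝ)..t, -((Jmat * H s) *ᵥ v s) := fun t ht => by
    rw [intervalIntegral.integral_neg, ← sub_eq_add_neg, ← huv t ht.1]
  have hibp := intervalIntegral.integral_bilin_eq_sub (sesqFormL Jmat) hx
    (intervalIntegrable_neg_Jmat_mul_mulVec hmeas hloc hpsd hgm hgL2 hx)
    (intervalIntegrable_neg_Jmat_mul_mulVec hmeas hloc hpsd hkm hkL2 hx)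
    (hprimitive hf) (hprimitive hh)
  have hintegrand : ∀ᵐ t, t ∈ uIoc 0 x →
      sesqFormL Jmat (-((Jmat * H t) *ᵥ g t)) (h t) + sesqFormL Jmat (f t) (-((Jmat * H t) *ᵥ k t))
        = star (f t) ⬝ᵥ H t *ᵥ k t - star (g t) ⬝ᵥ H t *ᵥ h t := by
    filter_upwards [(ae_restrict_iff' measurableSet_Ici).1 hpsd] with t ht htx
    exact (ht (uIoc_of_le hx ▸ htx).1.le).isHermitian.sesqFormL_Jmat_neg_mulVec _ _ _ _
  rw [← intervalIntegral.integral_congr_ae hintegrand, hibp, sesqFormL_apply, sesqFormL_apply,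
    add_sub_cancel]

end CanonicalSystem

/-- Lemma on existence of the limit `lim_{x→∞} f(x)* J h(x)` for pairs in the maximal
relation: if `Jf' = Hg`, `Jh' = Hk` with `f,g,h,k ∈ L²(H,ℝ₊)`, then
`f(x)* J h(x) → f(0)* J h(0) + ∫₀^∞ (f*Hk − g*Hh)`, both integrals converging absolutely. -/
theorem statement3 (H : ℝ → Matrix (Fin 2) (Fin 2) ℂ)
    (hmeas : ∀ i j, Measurable fun x => H x i j)
    (hpsd : ∀ᵐ x ∂(volume.restrict (Set.Ici (0:ℝ))), (H x).PosSemidef)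
    (hloc : ∀ i j, LocallyIntegrableOn (fun x => H x i j) (Set.Ici (0:ℝ)))
    (f g h k : ℝ → Fin 2 → ℂ)
    (hfm : Measurable f) (hgm : Measurable g) (hhm : Measurable h) (hkm : Measurable k)
    (hfL2 : InL2 H f) (hgL2 : InL2 H g) (hhL2 : InL2 H h) (hkL2 : InL2 H k)
    (hf : ∀ x ≥ (0:ℝ), f x = f 0 - ∫ t in (0:ℝ)..x, (Jmat * H t).mulVec (g t))
    (hh : ∀ x ≥ (0:ℝ), h x = h 0 - ∫ t in (0:ℝ)..x, (Jmat * H t).mulVec (k t)) :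
    IntegrableOn (fun t => star (f t) ⬝ᵥ (H t).mulVec (k t)) (Set.Ioi 0) ∧
    IntegrableOn (fun t => star (g t) ⬝ᵥ (H t).mulVec (h t)) (Set.Ioi 0) ∧
    Filter.Tendsto (fun x => star (f x) ⬝ᵥ Jmat.mulVec (h x)) Filter.atTop
      (nhds (star (f 0) ⬝ᵥ Jmat.mulVec (h 0) +
        ∫ t in Set.Ioi (0:ℝ),
          (star (f t) ⬝ᵥ (H t).mulVec (k t) - star (g t) ⬝ᵥ (H t).mulVec (h t)))) := by
  have hpsdIoi : ∀ᵐ t ∂(volume.restrict (Ioi (0:ℝ))), (H t).PosSemidef :=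
    ae_restrict_of_ae_restrict_of_subset Ioi_subset_Ici_self hpsd
  have hfk := hfL2.integrableOn_star_dotProduct_mulVec hmeas hpsdIoi hfm hkm hkL2
  have hgh := hgL2.integrableOn_star_dotProduct_mulVec hmeas hpsdIoi hgm hhm hhL2
  refine ⟨hfk, hgh, ?_⟩
  refine (tendsto_const_nhds.add
    (intervalIntegral_tendsto_integral_Ioi 0 (hfk.sub hgh) tendsto_id)).congr' ?_
  filter_upwards [eventually_ge_atTop 0] with x hx
  rw [star_dotProduct_Jmat_mulVec_eq_add_integral hmeas hpsd hloc hgm hkm hgL2 hkL2 hf hh hx]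
  rfl
end
end

section
/- Fix N > 0 and z ∈ ℂ. Let f, w : [0,N] → ℂ² be solutions of Ju' = zHu on [0,N], let f̃, w̃ : [0,N] → ℂ² be solutions of Ju' = z̄Hu on [0,N], and assume the matrix identity f(x) w̃(x)* − w(x) f̃(x)* = J holds for all x ∈ [0,N]. Let h : [0,N] → ℂ² be measurable with ∫₀ᴺ |w̃(t)* H(t) h(t)| dt < ∞ and ∫₀ᴺ |f̃(t)* H(t) h(t)| dt < ∞, and define y(x) = f(x) ∫₀ˣ w̃(t)* H(t) h(t) dt + w(x) ∫ₓᴺ f̃(t)* H(t) h(t) dt. Then y is locally absolutely continuous and solves the inhomogeneous equation J y' = z H y − H h a.e. on [0,N]; equivalently y(x) = y(0) + ∫₀ˣ (−J)( z H(t) y(t) − H(t) h(t) ) dt for all x ∈ [0,N]. -/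
/-!
With `a = w̃* H h`, `b = f̃* H h`, `A(x) = ∫₀ˣ a` and `B(x) = ∫ₓᴺ b` we have `y = A f + B w`, and
the product rule for absolutely continuous functions gives `y' = (a f − b w) + (A f' + B w')`.
Applying `f w̃* − w f̃* = J` to `H h` turns the first bracket into `J H h`, and
`f' = −z J H f`, `w' = −z J H w` turn the second one into `−z J H y`.

The product rule needs the integrand `−z J H u` of a solution `u` to be integrable, which the
integral equation defining a solution does not say by itself. For `u = u(a) + ∫ₐ M u` with `M`
integrable, a Gronwall-type estimate shows that `‖u‖` at most doubles on an interval where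
`∫ ‖M‖ ≤ 1/2`, so integrability of `M u` on `[a, r]` cannot break down at the supremum of such `r`.
-/

open MeasureTheory Matrix Set
open scoped ComplexOrder

noncomputable section

/-- `u` is a solution of the canonical system `J u' = z H u` on `[0,N]`:
`u(x) = u(0) − z ∫₀ˣ J H(t) u(t) dt` for all `x ∈ [0,N]`. -/
def IsSolutionOn (N : ℝ) (H : ℝ → Matrix (Fin 2) (Fin 2) ℂ) (z : ℂ)
    (u : ℝ → Fin 2 → ℂ) : Prop :=
  ∀ x ∈ Set.Icc (0:ℝ) N, u x = u 0 - z • ∫ t in (0:ℝ)..x, (Jmat * H t).mulVec (u t)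

open Filter

section AbsolutelyContinuous

variable {𝕜 E : Type*} [RCLike 𝕜] [NormedAddCommGroup E] [NormedSpace ℝ E] [NormedSpace 𝕜 E]
  {a b : ℝ}

theorem AbsolutelyContinuousOnInterval.of_dist_le {X Y : Type*} [PseudoMetricSpace X]
    [PseudoMetricSpace Y] {f : ℝ → X} {g : ℝ → Y}
    (hg : AbsolutelyContinuousOnInterval g a b)
    (hfg : ∀ x ∈ uIcc a b, ∀ y ∈ uIcc a b, dist (f x) (f y) ≤ dist (g x) (g y)) :
    AbsolutelyContinuousOnInterval f a b := by
  refine squeeze_zero' (Eventually.of_forall fun _ => Finset.sum_nonneg fun _ _ => dist_nonneg)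
    ?_ hg
  filter_upwards [mem_inf_of_right (mem_principal_self _)] with E hE
  exact Finset.sum_le_sum fun i hi => hfg _ (hE.1 i hi).1 _ (hE.1 i hi).2

theorem AbsolutelyContinuousOnInterval.of_eq_add_integral {F f : ℝ → E}
    (hf : IntervalIntegrable f volume a b)
    (hF : ∀ x ∈ uIcc a b, F x = F a + ∫ t in a..x, f t) :
    AbsolutelyContinuousOnInterval F a b := by
  refine (hf.norm.absolutelyContinuousOnInterval_intervalIntegral left_mem_uIcc).of_dist_le
    fun x hx y hy => ?_
  have hfx := hf.mono_set (uIcc_subset_uIcc left_mem_uIcc hx)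
  have hfy := hf.mono_set (uIcc_subset_uIcc left_mem_uIcc hy)
  rw [hF x hx, hF y hy, dist_add_left, dist_eq_norm, Real.dist_eq,
    intervalIntegral.integral_interval_sub_left hfx hfy,
    intervalIntegral.integral_interval_sub_left hfx.norm hfy.norm]
  exact intervalIntegral.norm_integral_le_abs_integral_norm

theorem continuousOn_Icc_of_eq_add_integral {u g : ℝ → E} (hab : a ≤ b)
    (hg : IntervalIntegrable g volume a b) (hu : ∀ x ∈ Icc a b, u x = u a + ∫ t in a..x, g t) :
    ContinuousOn u (Icc a b) := by
  rw [← uIcc_of_le hab] at hu ⊢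
  exact (AbsolutelyContinuousOnInterval.of_eq_add_integral hg hu).continuousOn

theorem intervalIntegrable_smul_add_smul_of_eq_add_integral {F φ : ℝ → 𝕜} {G ψ : ℝ → E}
    (hφ : IntervalIntegrable φ volume a b) (hψ : IntervalIntegrable ψ volume a b)
    (hF : ∀ x ∈ uIcc a b, F x = F a + ∫ t in a..x, φ t)
    (hG : ∀ x ∈ uIcc a b, G x = G a + ∫ t in a..x, ψ t) :
    IntervalIntegrable (fun t => F t • ψ t + φ t • G t) volume a b :=
  (hψ.continuousOn_smul (AbsolutelyContinuousOnInterval.of_eq_add_integral hφ hF).continuousOn).add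
    (hφ.smul_continuousOn (AbsolutelyContinuousOnInterval.of_eq_add_integral hψ hG).continuousOn)

variable [CompleteSpace E]

theorem ae_hasDerivAt_of_eq_add_integral {F f : ℝ → E}
    (hf : IntervalIntegrable f volume a b)
    (hF : ∀ x ∈ uIcc a b, F x = F a + ∫ t in a..x, f t) :
    ∀ᵐ x, x ∈ uIcc a b → HasDerivAt F (f x) x := by
  filter_upwards [hf.ae_hasDerivAt_integral, volume.ae_ne a, volume.ae_ne b]
    with x hderiv hxa hxb hx
  have hinterior : uIcc a b ∈ nhds x := by
    refine Icc_mem_nhds (lt_of_le_of_ne hx.1 ?_) (lt_of_le_of_ne hx.2 ?_)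
    · rcases min_choice a b with h | h <;> rw [h] <;> [exact hxa.symm; exact hxb.symm]
    · rcases max_choice a b with h | h <;> rw [h] <;> assumption
  exact ((hderiv hx a left_mem_uIcc).const_add (F a)).congr_of_eventuallyEq
    (eventually_of_mem hinterior hF)

theorem AbsolutelyContinuousOnInterval.eq_add_integral_of_ae_hasDerivAt {F f : ℝ → E}
    (hF : AbsolutelyContinuousOnInterval F a b) (hf : IntervalIntegrable f volume a b)
    (hderiv : ∀ᵐ x, x ∈ uIcc a b → HasDerivAt F (f x) x) :
    ∀ x ∈ uIcc a b, F x = F a + ∫ t in a..x, f t := by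
  have hD : AbsolutelyContinuousOnInterval (fun x => F x - ∫ t in a..x, f t) a b :=
    hF.sub (.of_eq_add_integral hf fun x _ => by simp)
  obtain ⟨C, hC⟩ := hD.const_of_ae_hasDerivAt_zero <| by
    filter_upwards [hderiv, hf.ae_hasDerivAt_integral] with x hFx hfx hx
    simpa using (hFx hx).fun_sub (hfx hx a left_mem_uIcc)
  intro x hx
  have := (hC x hx).trans (hC a left_mem_uIcc).symm
  simp only [intervalIntegral.integral_same, sub_zero] at this
  rw [← this]
  abel

variable [IsScalarTower ℝ 𝕜 E]

theorem smul_eq_add_integral_of_eq_add_integral {F φ : ℝ → 𝕜} {G ψ : ℝ → E}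
    (hφ : IntervalIntegrable φ volume a b) (hψ : IntervalIntegrable ψ volume a b)
    (hF : ∀ x ∈ uIcc a b, F x = F a + ∫ t in a..x, φ t)
    (hG : ∀ x ∈ uIcc a b, G x = G a + ∫ t in a..x, ψ t) :
    F b • G b = F a • G a + ∫ t in a..b, F t • ψ t + φ t • G t := by
  refine ((AbsolutelyContinuousOnInterval.of_eq_add_integral hφ hF).fun_smul
    (.of_eq_add_integral hψ hG)).eq_add_integral_of_ae_hasDerivAt
    (intervalIntegrable_smul_add_smul_of_eq_add_integral hφ hψ hF hG) ?_ b right_mem_uIcc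
  filter_upwards [ae_hasDerivAt_of_eq_add_integral hφ hF, ae_hasDerivAt_of_eq_add_integral hψ hG]
    with x hFx hGx hx
  exact (hFx hx).smul (hGx hx)

theorem smul_add_smul_eq_add_integral_of_eq_add_integral {F₁ φ₁ F₂ φ₂ : ℝ → 𝕜}
    {G₁ ψ₁ G₂ ψ₂ : ℝ → E}
    (hφ₁ : IntervalIntegrable φ₁ volume a b) (hψ₁ : IntervalIntegrable ψ₁ volume a b)
    (hφ₂ : IntervalIntegrable φ₂ volume a b) (hψ₂ : IntervalIntegrable ψ₂ volume a b)
    (hF₁ : ∀ x ∈ uIcc a b, F₁ x = F₁ a + ∫ t in a..x, φ₁ t)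
    (hG₁ : ∀ x ∈ uIcc a b, G₁ x = G₁ a + ∫ t in a..x, ψ₁ t)
    (hF₂ : ∀ x ∈ uIcc a b, F₂ x = F₂ a + ∫ t in a..x, φ₂ t)
    (hG₂ : ∀ x ∈ uIcc a b, G₂ x = G₂ a + ∫ t in a..x, ψ₂ t) :
    F₁ b • G₁ b + F₂ b • G₂ b = F₁ a • G₁ a + F₂ a • G₂ a +
      ∫ t in a..b, (F₁ t • ψ₁ t + φ₁ t • G₁ t) + (F₂ t • ψ₂ t + φ₂ t • G₂ t) := by
  rw [smul_eq_add_integral_of_eq_add_integral hφ₁ hψ₁ hF₁ hG₁,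
    smul_eq_add_integral_of_eq_add_integral hφ₂ hψ₂ hF₂ hG₂, intervalIntegral.integral_add
      (intervalIntegrable_smul_add_smul_of_eq_add_integral hφ₁ hψ₁ hF₁ hG₁)
      (intervalIntegrable_smul_add_smul_of_eq_add_integral hφ₂ hψ₂ hF₂ hG₂)]
  abel

end AbsolutelyContinuous

theorem norm_le_two_mul_of_eq_add_integral {E : Type*} [NormedAddCommGroup E] [NormedSpace ℝ E]
    {u g : ℝ → E} {K : ℝ → ℝ} {a b : ℝ} (hab : a ≤ b) (hu : ContinuousOn u (Icc a b))
    (hug : ∀ x ∈ Icc a b, u x = u a + ∫ t in a..x, g t)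
    (hgK : ∀ t ∈ Icc a b, ‖g t‖ ≤ K t * ‖u t‖) (hK0 : ∀ t, 0 ≤ K t)
    (hK : IntervalIntegrable K volume a b) (hK_half : ∫ t in a..b, K t ≤ 1 / 2) :
    ∀ x ∈ Icc a b, ‖u x‖ ≤ 2 * ‖u a‖ := by
  obtain ⟨m, hm, hmax⟩ := isCompact_Icc.exists_isMaxOn (nonempty_Icc.2 hab) hu.norm
  have hKm : ∫ t in a..m, K t ≤ 1 / 2 :=
    (intervalIntegral.integral_mono_interval le_rfl hm.1 hm.2
      (Eventually.of_forall fun t => hK0 t) hK).trans hK_half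
  have hintegral : ‖∫ t in a..m, g t‖ ≤ (∫ t in a..m, K t) * ‖u m‖ := by
    rw [← intervalIntegral.integral_mul_const]
    refine intervalIntegral.norm_integral_le_of_norm_le hm.1 (Eventually.of_forall fun t ht => ?_)
      ((hK.mono_set (uIcc_subset_uIcc left_mem_uIcc (Icc_subset_uIcc hm))).mul_const _)
    have ht' : t ∈ Icc a b := ⟨ht.1.le, ht.2.trans hm.2⟩
    exact (hgK t ht').trans (mul_le_mul_of_nonneg_left (hmax ht') (hK0 t))
  have hum : ‖u m‖ ≤ ‖u a‖ + 1 / 2 * ‖u m‖ := calc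
    ‖u m‖ ≤ ‖u a‖ + ‖∫ t in a..m, g t‖ := by rw [hug m hm]; exact norm_add_le _ _
    _ ≤ ‖u a‖ + 1 / 2 * ‖u m‖ := by
      gcongr; exact hintegral.trans (mul_le_mul_of_nonneg_right hKm (norm_nonneg _))
  intro x hx
  linarith [isMaxOn_iff.1 hmax x hx]

theorem exists_mem_Ioo_integral_lt {K : ℝ → ℝ} {a c ε : ℝ} (hac : a < c)
    (hK : IntegrableOn K (Icc a c)) (hε : 0 < ε) :
    ∃ x ∈ Ioo a c, ∫ t in x..c, K t < ε := by
  rw [← uIcc_of_le hac.le] at hK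
  have hcont : ContinuousWithinAt (fun x => ∫ t in x..c, K t) (Ioo a c) c :=
    (intervalIntegral.continuousOn_primitive_interval_left hK c right_mem_uIcc).mono
      (Ioo_subset_Icc_self.trans Icc_subset_uIcc)
  rw [ContinuousWithinAt, intervalIntegral.integral_same, nhdsWithin_Ioo_eq_nhdsLT hac] at hcont
  exact ((hcont.eventually (gt_mem_nhds hε)).and (Ioo_mem_nhdsLT hac)).exists.imp
    fun x hx => ⟨hx.2, hx.1⟩

section LinearIntegralEquation

variable {𝕜 ι : Type*} [RCLike 𝕜] [Fintype ι] {M : ℝ → Matrix ι ι 𝕜} {u : ℝ → ι → 𝕜}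

theorem norm_mulVec_le_sum_norm (M : Matrix ι ι 𝕜) (v : ι → 𝕜) :
    ‖M *ᵥ v‖ ≤ (∑ i, ∑ j, ‖M i j‖) * ‖v‖ := by
  refine (pi_norm_le_iff_of_nonneg (by positivity)).2 fun i => ?_
  calc ‖(M *ᵥ v) i‖ ≤ ∑ j, ‖M i j‖ * ‖v j‖ := by
        simpa [mulVec, dotProduct] using norm_sum_le Finset.univ fun j => M i j * v j
    _ ≤ (∑ j, ‖M i j‖) * ‖v‖ := by
        rw [Finset.sum_mul]; gcongr; exact norm_le_pi_norm v _
    _ ≤ (∑ i, ∑ j, ‖M i j‖) * ‖v‖ := by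
        gcongr ?_ * _
        exact Finset.single_le_sum (f := fun i => ∑ j, ‖M i j‖) (fun _ _ => by positivity)
          (Finset.mem_univ i)

theorem aestronglyMeasurable_mulVec {α : Type*} [MeasurableSpace α] {μ : Measure α}
    {M : α → Matrix ι ι 𝕜} {u : α → ι → 𝕜} (hM : ∀ i j, AEStronglyMeasurable (fun t => M t i j) μ)
    (hu : AEStronglyMeasurable u μ) : AEStronglyMeasurable (fun t => M t *ᵥ u t) μ := by
  refine (aemeasurable_pi_iff.2 fun i => ?_).aestronglyMeasurable
  simp only [mulVec, dotProduct]
  exact (Finset.aestronglyMeasurable_fun_sum _ fun j _ =>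
    (hM i j).mul ((continuous_apply j).comp_aestronglyMeasurable hu)).aemeasurable

theorem integrableOn_mulVec_const {s : Set ℝ} (hM : ∀ i j, IntegrableOn (fun t => M t i j) s)
    (v : ι → 𝕜) : IntegrableOn (fun t => M t *ᵥ v) s := by
  refine integrable_pi_iff.2 fun i => ?_
  simp only [mulVec, dotProduct]
  exact integrable_finsetSum _ fun j _ => (hM i j).mul_const (v j)

theorem exists_bound_Ioo_of_forall_lt {a c : ℝ} (hac : a < c)
    (hM : ∀ i j, IntegrableOn (fun t => M t i j) (Icc a c))
    (hu : ∀ x ∈ Icc a c, u x = u a + ∫ t in a..x, M t *ᵥ u t)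
    (hlt : ∀ r ∈ Ico a c, IntervalIntegrable (fun t => M t *ᵥ u t) volume a r) :
    ∃ B, ∀ t ∈ Ioo a c, ‖u t‖ ≤ B := by
  set K : ℝ → ℝ := fun t => ∑ i, ∑ j, ‖M t i j‖
  have hK : IntegrableOn K (Icc a c) :=
    integrable_finsetSum _ fun i _ => integrable_finsetSum _ fun j _ => (hM i j).norm
  have hKi : ∀ r ∈ Icc a c, ∀ s ∈ Icc a c, IntervalIntegrable K volume r s :=
    fun r hr s hs => (hK.mono_set (uIcc_subset_Icc hr hs)).intervalIntegrable
  obtain ⟨x₀, hx₀, hKx₀⟩ := exists_mem_Ioo_integral_lt hac hK one_half_pos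
  have hnear : ∀ x ∈ Ico x₀ c, ‖u x‖ ≤ 2 * ‖u x₀‖ := fun x hx => by
    have hx' : x ∈ Ico a c := ⟨hx₀.1.le.trans hx.1, hx.2⟩
    have hgi : ∀ r ∈ Icc a x, ∀ s ∈ Icc a x, IntervalIntegrable (fun t => M t *ᵥ u t) volume r s :=
      fun r hr s hs => (hlt x hx').mono_set (by rw [uIcc_of_le hx'.1]; exact uIcc_subset_Icc hr hs)
    have hux : ∀ y ∈ Icc a x, u y = u a + ∫ t in a..y, M t *ᵥ u t :=
      fun y hy => hu y ⟨hy.1, hy.2.trans hx.2.le⟩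
    refine norm_le_two_mul_of_eq_add_integral hx.1
      ((continuousOn_Icc_of_eq_add_integral hx'.1 (hlt x hx') hux).mono
        (Icc_subset_Icc_left hx₀.1.le)) (fun y hy => ?_)
      (fun t _ => norm_mulVec_le_sum_norm _ _) (fun t => by positivity)
      (hKi _ ⟨hx₀.1.le, hx₀.2.le⟩ _ ⟨hx'.1, hx.2.le⟩) ?_ x (right_mem_Icc.2 hx.1)
    · have hx₀x : x₀ ∈ Icc a x := ⟨hx₀.1.le, hx.1⟩
      have hyx : y ∈ Icc a x := ⟨hx₀.1.le.trans hy.1, hy.2⟩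
      rw [hux y hyx, hux x₀ hx₀x, add_assoc, intervalIntegral.integral_add_adjacent_intervals
        (hgi _ (left_mem_Icc.2 hx'.1) _ hx₀x) (hgi _ hx₀x _ hyx)]
    · exact (intervalIntegral.integral_mono_interval le_rfl hx.1 hx.2.le
        (Eventually.of_forall fun t => by positivity)
        (hKi _ ⟨hx₀.1.le, hx₀.2.le⟩ _ ⟨hac.le, le_rfl⟩)).trans hKx₀.le
  obtain ⟨C₀, hC₀⟩ := isCompact_Icc.exists_bound_of_continuousOn
    (continuousOn_Icc_of_eq_add_integral hx₀.1.le (hlt x₀ ⟨hx₀.1.le, hx₀.2⟩)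
      fun y hy => hu y ⟨hy.1, hy.2.trans hx₀.2.le⟩)
  exact ⟨max C₀ (2 * ‖u x₀‖), fun t ht => (le_total t x₀).elim
    (fun h => (hC₀ t ⟨ht.1.le, h⟩).trans (le_max_left _ _))
    (fun h => (hnear t ⟨h, ht.2⟩).trans (le_max_right _ _))⟩

theorem intervalIntegrable_mulVec_of_forall_lt {a c : ℝ} (hac : a ≤ c)
    (hM : ∀ i j, IntegrableOn (fun t => M t i j) (Icc a c))
    (hu : ∀ x ∈ Icc a c, u x = u a + ∫ t in a..x, M t *ᵥ u t)
    (hlt : ∀ r ∈ Ico a c, IntervalIntegrable (fun t => M t *ᵥ u t) volume a r) :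
    IntervalIntegrable (fun t => M t *ᵥ u t) volume a c := by
  rcases hac.eq_or_lt with rfl | hac
  · exact .refl
  obtain ⟨B, hB⟩ := exists_bound_Ioo_of_forall_lt hac hM hu hlt
  have hcontinuous : ContinuousOn u (Ioo a c) := fun t ht => by
    obtain ⟨r, htr, hrc⟩ := exists_between ht.2
    have hr : r ∈ Ico a c := ⟨ht.1.le.trans htr.le, hrc⟩
    refine ((continuousOn_Icc_of_eq_add_integral hr.1 (hlt r hr) fun y hy => ?_).continuousAt
      (Icc_mem_nhds ht.1 htr)).continuousWithinAt
    exact hu y ⟨hy.1, hy.2.trans hrc.le⟩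
  rw [intervalIntegrable_iff_integrableOn_Ioo_of_le hac.le]
  refine Integrable.mono' ((integrable_finsetSum Finset.univ fun i _ =>
      integrable_finsetSum Finset.univ fun j _ =>
      ((hM i j).mono_set Ioo_subset_Icc_self).norm).mul_const B)
    (aestronglyMeasurable_mulVec (fun i j => ((hM i j).mono_set Ioo_subset_Icc_self).1)
      (hcontinuous.aestronglyMeasurable measurableSet_Ioo)) ?_
  filter_upwards [ae_restrict_mem measurableSet_Ioo] with t ht
  exact (norm_mulVec_le_sum_norm _ _).trans (mul_le_mul_of_nonneg_left (hB t ht) (by positivity))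

theorem intervalIntegrable_mulVec_of_eq_add_integral {a b : ℝ} (hab : a ≤ b)
    (hM : ∀ i j, IntegrableOn (fun t => M t i j) (Icc a b))
    (hu : ∀ x ∈ Icc a b, u x = u a + ∫ t in a..x, M t *ᵥ u t) :
    IntervalIntegrable (fun t => M t *ᵥ u t) volume a b := by
  set S := {r ∈ Icc a b | IntervalIntegrable (fun t => M t *ᵥ u t) volume a r}
  have hS : BddAbove S := ⟨b, fun r hr => hr.1.2⟩
  have haS : a ∈ S := ⟨left_mem_Icc.2 hab, .refl⟩
  have hac : a ≤ sSup S := le_csSup hS haS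
  have hcb : sSup S ≤ b := csSup_le ⟨a, haS⟩ fun r hr => hr.1.2
  have hsup := intervalIntegrable_mulVec_of_forall_lt hac
    (fun i j => (hM i j).mono_set (Icc_subset_Icc_right hcb))
    (fun x hx => hu x ⟨hx.1, hx.2.trans hcb⟩) fun r hr => by
      obtain ⟨s, hs, hrs⟩ := exists_lt_of_lt_csSup ⟨a, haS⟩ hr.2
      exact hs.2.mono_set (uIcc_subset_uIcc left_mem_uIcc (Icc_subset_uIcc ⟨hr.1, hrs.le⟩))
  -- Past `sSup S` the integral in `hu` is the junk value `0`, so `u` is constant there.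
  have hconst : ∀ x ∈ Ioc (sSup S) b, u x = u a := fun x hx => by
    have hxa : a ≤ x := hac.trans hx.1.le
    have : ¬ IntervalIntegrable (fun t => M t *ᵥ u t) volume a x := fun h =>
      (le_csSup hS ⟨⟨hxa, hx.2⟩, h⟩).not_gt hx.1
    rw [hu x ⟨hxa, hx.2⟩, intervalIntegral.integral_undef this, add_zero]
  refine hsup.trans ((intervalIntegrable_iff_integrableOn_Ioc_of_le hcb).2 ?_)
  refine (integrableOn_mulVec_const (fun i j => (hM i j).mono_set ?_) (u a)).congr_fun
    (fun x hx => by rw [hconst x hx]) measurableSet_Ioc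
  exact Ioc_subset_Icc_self.trans (Icc_subset_Icc_left hac)

end LinearIntegralEquation

theorem IsSolutionOn.eq_add_integral {N : ℝ} {H : ℝ → Matrix (Fin 2) (Fin 2) ℂ} {z : ℂ}
    {u : ℝ → Fin 2 → ℂ} (hu : IsSolutionOn N H z u) :
    ∀ x ∈ Icc 0 N, u x = u 0 + ∫ t in (0 : ℝ)..x, ((-z) • (Jmat * H t)) *ᵥ u t := by
  intro x hx
  rw [hu x hx, sub_eq_add_neg, ← neg_smul, ← intervalIntegral.integral_smul]
  simp only [smul_mulVec]

theorem IsSolutionOn.intervalIntegrable_mulVec {N : ℝ} {H : ℝ → Matrix (Fin 2) (Fin 2) ℂ} {z : ℂ}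
    {u : ℝ → Fin 2 → ℂ} (hN : 0 ≤ N) (hH : ∀ i j, IntegrableOn (fun t => H t i j) (Icc 0 N))
    (hu : IsSolutionOn N H z u) :
    IntervalIntegrable (fun t => ((-z) • (Jmat * H t)) *ᵥ u t) volume 0 N := by
  refine intervalIntegrable_mulVec_of_eq_add_integral hN (fun i j => ?_) hu.eq_add_integral
  have hentry : (fun t => ((-z) • (Jmat * H t)) i j) = fun t => -z * ∑ k, Jmat i k * H t k j := by
    ext t; simp [Matrix.mul_apply]
  rw [hentry]
  exact (integrable_finsetSum _ fun k _ => (hH k j).const_mul (Jmat i k)).const_mul (-z)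

theorem green_integrand_eq {f w ft wt v : Fin 2 → ℂ} {Ht : Matrix (Fin 2) (Fin 2) ℂ} (z A B : ℂ)
    (hJ : vecMulVec f (star wt) - vecMulVec w (star ft) = Jmat) :
    (A • (((-z) • (Jmat * Ht)) *ᵥ f) + (star wt ⬝ᵥ Ht *ᵥ v) • f)
      + (B • (((-z) • (Jmat * Ht)) *ᵥ w) + (-(star ft ⬝ᵥ Ht *ᵥ v)) • w)
      = (-Jmat) *ᵥ (z • Ht *ᵥ (A • f + B • w) - Ht *ᵥ v) := by
  have hJv : (star wt ⬝ᵥ Ht *ᵥ v) • f - (star ft ⬝ᵥ Ht *ᵥ v) • w = Jmat *ᵥ (Ht *ᵥ v) := by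
    rw [← hJ, sub_mulVec, vecMulVec_mulVec, vecMulVec_mulVec, op_smul_eq_smul, op_smul_eq_smul]
  simp only [smul_mulVec, ← mulVec_mulVec, mulVec_add, mulVec_smul, mulVec_sub, neg_mulVec]
  rw [← hJv]
  module

theorem statement6_general (N : ℝ) (H : ℝ → Matrix (Fin 2) (Fin 2) ℂ)
    (hint : ∀ i j, IntegrableOn (fun x => H x i j) (Set.Icc (0:ℝ) N))
    (z : ℂ) (f w ft wt : ℝ → Fin 2 → ℂ)
    (hf : IsSolutionOn N H z f) (hw : IsSolutionOn N H z w)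
    (hJ : ∀ x ∈ Set.Icc (0:ℝ) N,
      vecMulVec (f x) (star (wt x)) - vecMulVec (w x) (star (ft x)) = Jmat)
    (h : ℝ → Fin 2 → ℂ)
    (hint1 : IntegrableOn (fun t => star (wt t) ⬝ᵥ (H t).mulVec (h t)) (Set.Icc (0:ℝ) N))
    (hint2 : IntegrableOn (fun t => star (ft t) ⬝ᵥ (H t).mulVec (h t)) (Set.Icc (0:ℝ) N))
    (y : ℝ → Fin 2 → ℂ)
    (hy : ∀ x ∈ Set.Icc (0:ℝ) N, y x =
      (∫ t in (0:ℝ)..x, star (wt t) ⬝ᵥ (H t).mulVec (h t)) • f x +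
      (∫ t in x..N, star (ft t) ⬝ᵥ (H t).mulVec (h t)) • w x) :
    ∀ x ∈ Set.Icc (0:ℝ) N, y x =
      y 0 + ∫ t in (0:ℝ)..x, (-Jmat).mulVec (z • (H t).mulVec (y t) - (H t).mulVec (h t)) := by
  intro x hx
  have hN : 0 ≤ N := hx.1.trans hx.2
  have hsub : uIcc 0 x ⊆ Icc 0 N := uIcc_subset_Icc ⟨le_rfl, hN⟩ hx
  have hsubN : uIcc 0 x ⊆ uIcc 0 N := by rwa [uIcc_of_le hN]
  set a := fun t => star (wt t) ⬝ᵥ H t *ᵥ h t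
  set b := fun t => star (ft t) ⬝ᵥ H t *ᵥ h t
  have hb : IntervalIntegrable b volume 0 N :=
    (hint2.mono_set (uIcc_of_le hN).subset).intervalIntegrable
  have hA : ∀ s ∈ uIcc 0 x, ∫ t in (0:ℝ)..s, a t = (∫ t in (0:ℝ)..0, a t) + ∫ t in (0:ℝ)..s, a t :=
    fun s _ => by simp
  have hB : ∀ s ∈ uIcc 0 x, ∫ t in s..N, b t = (∫ t in (0:ℝ)..N, b t) + ∫ t in (0:ℝ)..s, -b t :=
    fun s hs => by
      rw [intervalIntegral.integral_neg, ← sub_eq_add_neg,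
        intervalIntegral.integral_interval_sub_left hb
          (hb.mono_set (uIcc_subset_uIcc left_mem_uIcc (hsubN hs)))]
  rw [hy x hx, hy 0 ⟨le_rfl, hN⟩, smul_add_smul_eq_add_integral_of_eq_add_integral
    (hint1.mono_set hsub).intervalIntegrable ((hf.intervalIntegrable_mulVec hN hint).mono_set hsubN)
    (hb.mono_set hsubN).neg ((hw.intervalIntegrable_mulVec hN hint).mono_set hsubN)
    hA (fun s hs => hf.eq_add_integral s (hsub hs)) hB (fun s hs => hw.eq_add_integral s (hsub hs))]
  congr 1
  refine intervalIntegral.integral_congr fun t ht => ?_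
  rw [hy t (hsub ht)]
  exact green_integrand_eq z _ _ (hJ t (hsub ht))

/-- Green's function lemma on `[0,N]`: with `f, w` solutions for `z`, `f̃, w̃` solutions for
`z̄` satisfying `f w̃* − w f̃* = J`, the function
`y(x) = f(x)∫₀ˣ w̃*Hh + w(x)∫ₓᴺ f̃*Hh` solves `Jy' = zHy − Hh` on `[0,N]`. -/
theorem statement6 (N : ℝ) (hN : 0 < N) (H : ℝ → Matrix (Fin 2) (Fin 2) ℂ)
    (hmeas : ∀ i j, Measurable fun x => H x i j)
    (hpsd : ∀ᵐ x ∂(volume.restrict (Set.Icc (0:ℝ) N)), (H x).PosSemidef)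
    (hint : ∀ i j, IntegrableOn (fun x => H x i j) (Set.Icc (0:ℝ) N))
    (z : ℂ) (f w ft wt : ℝ → Fin 2 → ℂ)
    (hf : IsSolutionOn N H z f) (hw : IsSolutionOn N H z w)
    (hft : IsSolutionOn N H (starRingEnd ℂ z) ft)
    (hwt : IsSolutionOn N H (starRingEnd ℂ z) wt)
    (hJ : ∀ x ∈ Set.Icc (0:ℝ) N,
      vecMulVec (f x) (star (wt x)) - vecMulVec (w x) (star (ft x)) = Jmat)
    (h : ℝ → Fin 2 → ℂ) (hhm : Measurable h)
    (hint1 : IntegrableOn (fun t => star (wt t) ⬝ᵥ (H t).mulVec (h t)) (Set.Icc (0:ℝ) N))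
    (hint2 : IntegrableOn (fun t => star (ft t) ⬝ᵥ (H t).mulVec (h t)) (Set.Icc (0:ℝ) N))
    (y : ℝ → Fin 2 → ℂ)
    (hy : ∀ x ∈ Set.Icc (0:ℝ) N, y x =
      (∫ t in (0:ℝ)..x, star (wt t) ⬝ᵥ (H t).mulVec (h t)) • f x +
      (∫ t in x..N, star (ft t) ⬝ᵥ (H t).mulVec (h t)) • w x) :
    ∀ x ∈ Set.Icc (0:ℝ) N, y x =
      y 0 + ∫ t in (0:ℝ)..x, (-Jmat).mulVec (z • (H t).mulVec (y t) - (H t).mulVec (h t)) :=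
  statement6_general N H hint z f w ft wt hf hw hJ h hint1 hint2 y hy
end
end
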